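/- arXiv:2509.11205 — 2 statements merged into one kernel-verified Lean document; each statement's English description precedes it below -/
import Mathlib

section
/- For the Manià functional, the infimum over Lipschitz admissible functions is strictly positive: there exists c > 0 such that I₁(w) = ∫₀¹ (x - w³)² |w'|⁶ dx ≥ c for every w ∈ W^{1,∞}(0,1) with w(0)=0 and w(1)=1. Consequently, since inf over W^{1,1} admissible functions equals 0 (attained at u(x)=x^{1/3}), the Lavrentiev gap phenomenon occurs: inf_{𝒲^∞} I₁ > inf_{𝒲¹} I₁ = 0. -/
open Real intervalIntegral

open MeasureTheory Filter Topology Set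

set_option maxHeartbeats 1000000


private lemma II_of_bound {f : ℝ → ℝ} (hm : Measurable f)
    {a b M : ℝ} (hb : ∀ x ∈ Set.uIoc a b, |f x| ≤ M) :
    IntervalIntegrable f volume a b := by
  rw [intervalIntegrable_iff]
  exact Measure.integrableOn_of_bounded (μ := volume) (s := Set.uIoc a b) (M := M)
    measure_Ioc_lt_top.ne hm.aestronglyMeasurable
    ((ae_restrict_iff' measurableSet_uIoc).2 (ae_of_all _ fun x hx => by
      simpa [Real.norm_eq_abs] using hb x hx))

private lemma int_of_bound {f : ℝ → ℝ} (hm : Measurable f)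
    {a b M : ℝ} (hb : ∀ x, |f x| ≤ M) :
    Integrable f (volume.restrict (Set.Ioc a b)) :=
  Measure.integrableOn_of_bounded (μ := volume) (s := Set.Ioc a b) (M := M)
    measure_Ioc_lt_top.ne hm.aestronglyMeasurable
    (ae_of_all _ fun x => by simpa [Real.norm_eq_abs] using hb x)

private lemma lip_ftc {K : NNReal} {w : ℝ → ℝ} (hw : LipschitzWith K w) (a b : ℝ) :
    w b - w a = ∫ x in a..b, deriv w x := by
  have hcont := hw.continuous
  set h : ℕ → ℝ := fun n => 1 / ((n : ℝ) + 1) with hh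
  have hpos : ∀ n : ℕ, 0 < h n := fun n => by positivity
  have hseq : ∀ c : ℝ, Tendsto (fun n : ℕ => c + h n) atTop (𝓝[≠] c) := by
    intro c
    rw [tendsto_nhdsWithin_iff]
    constructor
    · have h0 : Tendsto h atTop (𝓝 0) := tendsto_one_div_add_atTop_nhds_zero_nat
      simpa using tendsto_const_nhds.add h0
    · exact Eventually.of_forall fun n => by
        simp only [mem_compl_iff, mem_singleton_iff]
        have := hpos n; intro hcon; nlinarith [hcon]
  have bdry : ∀ c : ℝ, Tendsto (fun n : ℕ => ((n : ℝ) + 1) * ∫ x in c..(c + h n), w x)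
      atTop (𝓝 (w c)) := by
    intro c
    have hF : HasDerivAt (fun t => ∫ x in c..t, w x) (w c) c :=
      integral_hasDerivAt_right (hcont.intervalIntegrable c c)
        (hcont.stronglyMeasurableAtFilter _ _) hcont.continuousAt
    have hslope := hasDerivAt_iff_tendsto_slope.1 hF
    refine ((hslope.comp (hseq c)).congr fun n => ?_)
    have hne := (hpos n).ne'
    simp only [Function.comp_apply, slope_def_field, intervalIntegral.integral_same]
    rw [div_eq_iff (by simp only [add_sub_cancel_left]; exact hne)]
    simp only [add_sub_cancel_left, sub_zero, hh]
    field_simp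
  have key : ∀ n : ℕ, (∫ x in a..b, ((n : ℝ) + 1) * (w (x + h n) - w x))
      = ((n : ℝ) + 1) * ((∫ x in b..(b + h n), w x) - ∫ x in a..(a + h n), w x) := by
    intro n
    have hsh : Continuous fun x : ℝ => w (x + h n) :=
      hcont.comp (continuous_id.add continuous_const)
    rw [intervalIntegral.integral_const_mul]
    congr 1
    have i1 : IntervalIntegrable (fun x => w (x + h n)) volume a b := hsh.intervalIntegrable a b
    have i2 : IntervalIntegrable w volume a b := hcont.intervalIntegrable a b
    rw [intervalIntegral.integral_sub i1 i2, intervalIntegral.integral_comp_add_right]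
    have A := intervalIntegral.integral_add_adjacent_intervals (μ := volume)
      (hcont.intervalIntegrable a b) (hcont.intervalIntegrable b (b + h n))
    have B := intervalIntegral.integral_add_adjacent_intervals (μ := volume)
      (hcont.intervalIntegrable a (a + h n)) (hcont.intervalIntegrable (a + h n) (b + h n))
    linarith
  have lim1 : Tendsto (fun n : ℕ => ∫ x in a..b, ((n : ℝ) + 1) * (w (x + h n) - w x))
      atTop (𝓝 (w b - w a)) := by
    refine ((bdry b).sub (bdry a)).congr fun n => ?_
    rw [key n]; ring
  have lim2 : Tendsto (fun n : ℕ => ∫ x in a..b, ((n : ℝ) + 1) * (w (x + h n) - w x))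
      atTop (𝓝 (∫ x in a..b, deriv w x)) := by
    apply intervalIntegral.tendsto_integral_filter_of_dominated_convergence (fun _ => (K : ℝ))
    · refine Eventually.of_forall fun n => ?_
      exact (continuous_const.mul
        ((hcont.comp (continuous_id.add continuous_const)).sub hcont)).aestronglyMeasurable.restrict
    · refine Eventually.of_forall fun n => ae_of_all _ fun x _ => ?_
      have hd := hw.dist_le_mul (x + h n) x
      rw [Real.dist_eq, Real.dist_eq, show x + h n - x = h n by ring,
        abs_of_pos (hpos n)] at hd
      rw [Real.norm_eq_abs, abs_mul, abs_of_pos (by positivity : (0:ℝ) < (n:ℝ) + 1)]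
      calc ((n : ℝ) + 1) * |w (x + h n) - w x| ≤ ((n : ℝ) + 1) * ((K : ℝ) * h n) :=
            mul_le_mul_of_nonneg_left hd (by positivity)
        _ = (K : ℝ) := by simp only [hh]; field_simp
    · exact intervalIntegrable_const
    · have hae : ∀ᵐ x ∂(volume : Measure ℝ), DifferentiableAt ℝ w x :=
        hw.ae_differentiableAt
      filter_upwards [hae] with x hx _
      have hslope := hasDerivAt_iff_tendsto_slope.1 hx.hasDerivAt
      refine ((hslope.comp (hseq x)).congr fun n => ?_)
      have hne := (hpos n).ne'
      simp only [Function.comp_apply, slope_def_field]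
      rw [div_eq_iff (by simp only [add_sub_cancel_left]; exact hne)]
      simp only [add_sub_cancel_left, hh]
      field_simp
  exact tendsto_nhds_unique lim1 lim2

private lemma pow6_jensen {f : ℝ → ℝ} {a b M : ℝ} (hab : a < b)
    (hm : Measurable f) (hM : ∀ x, |f x| ≤ M) :
    (∫ x in a..b, f x) ^ 6 ≤ (b - a) ^ 5 * ∫ x in a..b, (f x) ^ 6 := by
  set μ := volume.restrict (Set.Ioc a b) with hμ
  have hba : (0:ℝ) < b - a := by linarith
  haveI : IsFiniteMeasure μ := ⟨by
    rw [hμ, Measure.restrict_apply_univ]; exact measure_Ioc_lt_top⟩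
  haveI : NeZero μ := ⟨by
    rw [hμ, Ne, Measure.restrict_eq_zero, Real.volume_Ioc]
    simp only [ENNReal.ofReal_eq_zero, not_le]
    exact hba⟩
  have hM0 : 0 ≤ M := le_trans (abs_nonneg _) (hM 0)
  have hfi : Integrable f μ := int_of_bound hm hM
  have hgi : Integrable (fun x => (f x) ^ 6) μ := by
    refine int_of_bound (hm.pow_const 6) (M := M ^ 6) fun x => ?_
    rw [abs_pow]
    exact pow_le_pow_left₀ (abs_nonneg _) (hM x) 6
  have hJ := (Even.convexOn_pow (𝕜 := ℝ) (by decide : Even 6)).map_average_le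
    (continuous_pow 6).continuousOn isClosed_univ (ae_of_all _ fun _ => mem_univ _) hfi hgi
  rw [average_eq, average_eq] at hJ
  have hμu : (μ univ).toReal = b - a := by
    rw [hμ, Measure.restrict_apply_univ, Real.volume_Ioc, ENNReal.toReal_ofReal hba.le]
  rw [measureReal_def, hμu] at hJ
  rw [intervalIntegral.integral_of_le hab.le, intervalIntegral.integral_of_le hab.le]
  have h6 : ((b - a)⁻¹) ^ 6 * (∫ x, f x ∂μ) ^ 6 ≤ (b - a)⁻¹ * ∫ x, (f x) ^ 6 ∂μ := by
    simpa [smul_eq_mul, mul_pow] using hJ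
  have hmul := mul_le_mul_of_nonneg_left h6 (le_of_lt (pow_pos hba 6))
  calc (∫ x, f x ∂μ) ^ 6
      = (b - a) ^ 6 * (((b - a)⁻¹) ^ 6 * (∫ x, f x ∂μ) ^ 6) := by
        field_simp
    _ ≤ (b - a) ^ 6 * ((b - a)⁻¹ * ∫ x, (f x) ^ 6 ∂μ) := hmul
    _ = (b - a) ^ 5 * ∫ x, (f x) ^ 6 ∂μ := by
        field_simp

/-- Lavrentiev gap for the Manià functional `I₁(w) = ∫₀¹ (x - w³)² |w'|⁶ dx`: the infimum over the
Lipschitz class `𝒲^∞ = {w ∈ W^{1,∞}(0,1) : w(0)=0, w(1)=1}` is strictly positive — there is `c > 0`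
with `I₁(w) ≥ c` for every Lipschitz admissible `w` — while the infimum over
`𝒲¹ = {w ∈ W^{1,1}(0,1) : w(0)=0, w(1)=1}` is `0`, attained at `u(x) = x^{1/3}`. -/
theorem stmt6
    (I₁ : (ℝ → ℝ) → ℝ)
    (hI₁ : ∀ w : ℝ → ℝ, I₁ w = ∫ x in (0:ℝ)..1, (x - (w x) ^ 3) ^ 2 * |deriv w x| ^ 6)
    (u : ℝ → ℝ) (hu : ∀ x : ℝ, u x = x ^ ((1:ℝ)/3)) :
    (∃ c : ℝ, 0 < c ∧
      ∀ w : ℝ → ℝ, (∃ K : NNReal, LipschitzWith K w) → w 0 = 0 → w 1 = 1 → c ≤ I₁ w) ∧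
    u 0 = 0 ∧ u 1 = 1 ∧ I₁ u = 0 ∧
    (∀ w : ℝ → ℝ, w 0 = 0 → w 1 = 1 → I₁ u ≤ I₁ w) := by
  have hIu : I₁ u = 0 := by
    rw [hI₁]
    have heq : EqOn (fun x : ℝ => (x - (u x) ^ 3) ^ 2 * |deriv u x| ^ 6)
        (fun _ => (0:ℝ)) (Set.uIcc 0 1) := by
      intro x hx
      rw [Set.uIcc_of_le (by norm_num)] at hx
      have hx0 : (0:ℝ) ≤ x := hx.1
      have hcube : (u x) ^ 3 = x := by
        rw [hu x, ← Real.rpow_natCast (x ^ ((1:ℝ)/3)) 3, ← Real.rpow_mul hx0]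
        norm_num
      simp [hcube]
    rw [intervalIntegral.integral_congr heq]
    simp
  refine ⟨⟨1/175616, by norm_num, ?_⟩, by rw [hu]; simp, by rw [hu]; simp, hIu,
    fun w _ _ => by
      rw [hIu, hI₁]
      exact intervalIntegral.integral_nonneg (by norm_num) fun x _ => by positivity⟩
  rintro w ⟨K, hK⟩ hw0 hw1
  rw [hI₁ w]
  set f : ℝ → ℝ := fun x => (x - (w x) ^ 3) ^ 2 * |deriv w x| ^ 6 with hf
  have hcont := hK.continuous
  set Kr : ℝ := (K : ℝ) + 1 with hKr
  have hKr1 : (1:ℝ) ≤ Kr := le_add_of_nonneg_left K.coe_nonneg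
  have hKr0 : (0:ℝ) < Kr := lt_of_lt_of_le one_pos hKr1
  have hlipR : ∀ x y : ℝ, |w x - w y| ≤ Kr * |x - y| := by
    intro x y
    have h1 := hK.dist_le_mul x y
    rw [Real.dist_eq, Real.dist_eq] at h1
    nlinarith [abs_nonneg (x - y), K.coe_nonneg]
  have hDb : ∀ x, |deriv w x| ≤ Kr := by
    intro x
    have h1 := norm_deriv_le_of_lipschitz (𝕜 := ℝ) (x₀ := x) hK
    rw [Real.norm_eq_abs] at h1
    linarith [K.coe_nonneg]
  have hDmeas : Measurable (deriv w) := measurable_deriv w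
  have hwB : ∀ x ∈ Set.Icc (0:ℝ) 1, |w x| ≤ Kr := by
    intro x hx
    have h1 := hlipR x 0
    rw [hw0, sub_zero, sub_zero, abs_of_nonneg hx.1] at h1
    nlinarith [hx.2]
  have hfmeas : Measurable f :=
    ((measurable_id.sub (hcont.measurable.pow_const 3)).pow_const 2).mul
      ((hDmeas.abs).pow_const 6)
  have hfb : ∀ x ∈ Set.Icc (0:ℝ) 1, |f x| ≤ (1 + Kr ^ 3) ^ 2 * Kr ^ 6 := by
    intro x hx
    have h1 : |x - (w x) ^ 3| ≤ 1 + Kr ^ 3 := by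
      have h2 : |(w x) ^ 3| ≤ Kr ^ 3 := by
        rw [abs_pow]
        exact pow_le_pow_left₀ (abs_nonneg _) (hwB x hx) 3
      have h3 : |x| ≤ 1 := by rw [abs_of_nonneg hx.1]; exact hx.2
      calc |x - (w x) ^ 3| ≤ |x| + |(w x) ^ 3| := abs_sub _ _
        _ ≤ 1 + Kr ^ 3 := add_le_add h3 h2
    have h4 : |deriv w x| ^ 6 ≤ Kr ^ 6 := pow_le_pow_left₀ (abs_nonneg _) (hDb x) 6
    rw [hf]
    simp only
    rw [abs_mul, abs_pow, abs_pow, abs_abs]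
    exact mul_le_mul (pow_le_pow_left₀ (abs_nonneg _) h1 2) h4 (by positivity) (by positivity)
  have hfInt : ∀ c d : ℝ, c ∈ Set.Icc (0:ℝ) 1 → d ∈ Set.Icc (0:ℝ) 1 →
      IntervalIntegrable f volume c d := by
    intro c d hc hd
    refine II_of_bound hfmeas (M := (1 + Kr ^ 3) ^ 2 * Kr ^ 6) fun x hx => ?_
    refine hfb x ?_
    have hsub : Set.uIoc c d ⊆ Set.Icc 0 1 :=
      Set.Ioc_subset_Icc_self.trans
        (Set.Icc_subset_Icc (le_min hc.1 hd.1) (max_le hc.2 hd.2))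
    exact hsub hx
  -- the crossing point
  set δ : ℝ := ((2 * Kr)⁻¹) ^ ((3:ℝ)/2) with hδ
  have hδ0 : 0 < δ := Real.rpow_pos_of_pos (by positivity) _
  have hinv1 : (2 * Kr)⁻¹ ≤ 1 := by
    rw [inv_le_one_iff₀]
    right; linarith
  have hδ1 : δ ≤ 1 := Real.rpow_le_one (by positivity) hinv1 (by norm_num)
  set S : Set ℝ := {x | x ∈ Set.Icc δ 1 ∧ x ^ ((1:ℝ)/3) ≤ 2 * w x} with hS
  have hS1 : (1:ℝ) ∈ S := ⟨⟨hδ1, le_refl 1⟩, by rw [Real.one_rpow, hw1]; norm_num⟩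
  have hSbdd : BddBelow S := ⟨δ, fun x hx => hx.1.1⟩
  have hSclosed : IsClosed S := by
    have hSeq : S = Set.Icc δ 1 ∩ {x | x ^ ((1:ℝ)/3) ≤ 2 * w x} := rfl
    rw [hSeq]
    exact isClosed_Icc.inter
      (isClosed_le (Real.continuous_rpow_const (by norm_num)) (continuous_const.mul hcont))
  set b := sInf S with hb
  have hbS : b ∈ S := hSclosed.csInf_mem ⟨1, hS1⟩ hSbdd
  obtain ⟨⟨hδb, hb1⟩, hbw⟩ := hbS
  have hb0 : 0 < b := lt_of_lt_of_le hδ0 hδb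
  have hsmall : ∀ x : ℝ, 0 < x → x < b → 2 * w x ≤ x ^ ((1:ℝ)/3) := by
    intro x hx hxb
    rcases le_or_gt δ x with hδx | hxδ
    · by_contra hcon
      push_neg at hcon
      have hxS : x ∈ S := ⟨⟨hδx, hxb.le.trans hb1⟩, hcon.le⟩
      exact absurd (csInf_le hSbdd hxS) (not_le.2 hxb)
    · have hwx : w x ≤ Kr * x := by
        have h1 := hlipR x 0
        rw [hw0, sub_zero, sub_zero, abs_of_nonneg hx.le] at h1
        exact (le_abs_self _).trans h1
      have h13 : (0:ℝ) ≤ x ^ ((1:ℝ)/3) := Real.rpow_nonneg hx.le _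
      have h23 : x ^ ((2:ℝ)/3) ≤ (2 * Kr)⁻¹ := by
        have h1 : x ^ ((2:ℝ)/3) ≤ δ ^ ((2:ℝ)/3) :=
          Real.rpow_le_rpow hx.le hxδ.le (by norm_num)
        have h2 : δ ^ ((2:ℝ)/3) = (2 * Kr)⁻¹ := by
          rw [hδ, ← Real.rpow_mul (by positivity : (0:ℝ) ≤ (2 * Kr)⁻¹)]
          norm_num
        linarith
      have hsplit : x = x ^ ((1:ℝ)/3) * x ^ ((2:ℝ)/3) := by
        rw [← Real.rpow_add hx]; norm_num
      calc 2 * w x ≤ 2 * (Kr * x) := by linarith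
        _ = (2 * Kr) * (x ^ ((1:ℝ)/3) * x ^ ((2:ℝ)/3)) := by rw [← hsplit]; ring
        _ ≤ (2 * Kr) * (x ^ ((1:ℝ)/3) * (2 * Kr)⁻¹) := by
            refine mul_le_mul_of_nonneg_left ?_ (by positivity)
            exact mul_le_mul_of_nonneg_left h23 h13
        _ = x ^ ((1:ℝ)/3) := by field_simp
  set a := b / 8 with ha
  have ha0 : 0 < a := by rw [ha]; positivity
  have hab : a < b := by rw [ha]; linarith
  have hB0 : (0:ℝ) ≤ b ^ ((1:ℝ)/3) := Real.rpow_nonneg hb0.le _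
  have hwa : 2 * w a ≤ (1/2) * b ^ ((1:ℝ)/3) := by
    have h1 := hsmall a ha0 hab
    have h2 : a ^ ((1:ℝ)/3) = (1/2) * b ^ ((1:ℝ)/3) := by
      rw [ha, show b / 8 = b * (1/8) by ring, Real.mul_rpow hb0.le (by norm_num)]
      have h8 : ((1:ℝ)/8) ^ ((1:ℝ)/3) = 1/2 := by
        rw [show ((1:ℝ)/8) = ((1:ℝ)/2) ^ (3:ℕ) by norm_num,
          ← Real.rpow_natCast ((1:ℝ)/2) 3, ← Real.rpow_mul (by norm_num : (0:ℝ) ≤ 1/2)]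
        norm_num
      rw [h8]; ring
    rw [h2] at h1
    exact h1
  have hwb2 : (1/2) * b ^ ((1:ℝ)/3) ≤ w b := by linarith
  have hftc := lip_ftc hK a b
  have hId : IntervalIntegrable (deriv w) volume a b :=
    II_of_bound hDmeas (M := Kr) fun x _ => hDb x
  have hIad : IntervalIntegrable (fun x => |deriv w x|) volume a b :=
    II_of_bound hDmeas.abs (M := Kr) fun x _ => by rw [abs_abs]; exact hDb x
  have hJlb : (1/4) * b ^ ((1:ℝ)/3) ≤ ∫ x in a..b, |deriv w x| := by
    have h1 : w b - w a ≤ ∫ x in a..b, |deriv w x| := by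
      rw [hftc]
      exact intervalIntegral.integral_mono hab.le hId hIad fun x => le_abs_self _
    linarith
  set J := ∫ x in a..b, |deriv w x| with hJdef
  have hjensen : (∫ x in a..b, |deriv w x|) ^ 6
      ≤ (b - a) ^ 5 * ∫ x in a..b, |deriv w x| ^ 6 := by
    have h9 := pow6_jensen (f := fun x => |deriv w x|) hab hDmeas.abs
      (M := Kr) fun x => by rw [abs_abs]; exact hDb x
    simpa using h9
  set I6 := ∫ x in a..b, |deriv w x| ^ 6 with hI6def
  have hI60 : 0 ≤ I6 :=
    intervalIntegral.integral_nonneg hab.le fun x _ => by positivity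
  have hIcd : IntervalIntegrable (fun x => |deriv w x| ^ 6) volume a b :=
    II_of_bound (hDmeas.abs.pow_const 6) (M := Kr ^ 6) fun x _ => by
      rw [abs_pow, abs_abs]; exact pow_le_pow_left₀ (abs_nonneg _) (hDb x) 6
  have hae2 : (fun x => (7*b/64) ^ 2 * |deriv w x| ^ 6)
      ≤ᵐ[volume.restrict (Set.Icc a b)] f := by
    have hne : ∀ᵐ x ∂(volume.restrict (Set.Icc a b)), x ≠ b ∧ x ≠ a := by
      apply ae_restrict_of_ae
      have hb' : ∀ᵐ x ∂(volume : Measure ℝ), x ≠ b := by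
        rw [ae_iff]
        simpa [Set.setOf_eq_eq_singleton] using Real.volume_singleton (x := b)
      have ha' : ∀ᵐ x ∂(volume : Measure ℝ), x ≠ a := by
        rw [ae_iff]
        simpa [Set.setOf_eq_eq_singleton] using Real.volume_singleton (x := a)
      exact hb'.and ha'
    filter_upwards [ae_restrict_mem measurableSet_Icc, hne] with x hx hxne
    have hax : a < x := lt_of_le_of_ne hx.1 (Ne.symm hxne.2)
    have hxb : x < b := lt_of_le_of_ne hx.2 hxne.1
    have hx0 : 0 < x := lt_trans ha0 hax
    have hsm := hsmall x hx0 hxb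
    have hcube : (w x) ^ 3 ≤ x / 8 := by
      have hwx2 : w x ≤ x ^ ((1:ℝ)/3) / 2 := by linarith
      have h5 := (Odd.strictMono_pow (R := ℝ) (by decide : Odd 3)).monotone hwx2
      have hx3 : (x ^ ((1:ℝ)/3) / 2) ^ (3:ℕ) = x / 8 := by
        rw [div_pow, ← Real.rpow_natCast (x ^ ((1:ℝ)/3)) 3, ← Real.rpow_mul hx0.le]
        norm_num
      calc (w x) ^ 3 ≤ (x ^ ((1:ℝ)/3) / 2) ^ 3 := h5
        _ = x / 8 := hx3
    have h78 : 7*b/64 ≤ x - (w x) ^ 3 := by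
      have h6 : b/8 ≤ x := by rw [← ha]; exact hx.1
      linarith
    have hsq : (7*b/64) ^ 2 ≤ (x - (w x) ^ 3) ^ 2 :=
      pow_le_pow_left₀ (by positivity) h78 2
    rw [hf]
    exact mul_le_mul_of_nonneg_right hsq (by positivity)
  have haI : a ∈ Set.Icc (0:ℝ) 1 := ⟨ha0.le, by rw [ha]; linarith⟩
  have hbI : b ∈ Set.Icc (0:ℝ) 1 := ⟨hb0.le, hb1⟩
  have h0I : (0:ℝ) ∈ Set.Icc (0:ℝ) 1 := by norm_num
  have h1I : (1:ℝ) ∈ Set.Icc (0:ℝ) 1 := by norm_num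
  have hstep1 : (7*b/64) ^ 2 * I6 ≤ ∫ x in a..b, f x := by
    have h7 := intervalIntegral.integral_mono_ae_restrict hab.le
      (hIcd.const_mul ((7*b/64) ^ 2)) (hfInt a b haI hbI) hae2
    rw [intervalIntegral.integral_const_mul] at h7
    exact h7
  have hstep2 : ∫ x in a..b, f x ≤ ∫ x in (0:ℝ)..1, f x := by
    have e1 := intervalIntegral.integral_add_adjacent_intervals
      (hfInt 0 a h0I haI) (hfInt a b haI hbI)
    have e2 := intervalIntegral.integral_add_adjacent_intervals
      (hfInt 0 b h0I hbI) (hfInt b 1 hbI h1I)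
    have n1 : 0 ≤ ∫ x in (0:ℝ)..a, f x :=
      intervalIntegral.integral_nonneg ha0.le fun x _ => by rw [hf]; positivity
    have n3 : 0 ≤ ∫ x in b..(1:ℝ), f x :=
      intervalIntegral.integral_nonneg hb1 fun x _ => by rw [hf]; positivity
    linarith
  have hJ6 : b ^ 2 / 4096 ≤ J ^ 6 := by
    have h1 : ((1/4) * b ^ ((1:ℝ)/3)) ^ 6 ≤ J ^ 6 :=
      pow_le_pow_left₀ (by positivity) hJlb 6
    have h2 : ((1/4) * b ^ ((1:ℝ)/3)) ^ 6 = b ^ 2 / 4096 := by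
      rw [mul_pow, ← Real.rpow_natCast (b ^ ((1:ℝ)/3)) 6, ← Real.rpow_mul hb0.le,
        show (1:ℝ)/3 * (6:ℕ) = ((2:ℕ):ℝ) by norm_num, Real.rpow_natCast]
      ring
    linarith
  have hba5 : (b - a) ^ 5 = (7*b/8) ^ 5 := by rw [ha]; ring
  rw [hba5] at hjensen
  have hb3 : (0:ℝ) < b ^ 3 := by positivity
  have hmul : (1:ℝ)/175616 * b ^ 3 ≤ ((7*b/64) ^ 2 * I6) * b ^ 3 := by
    have e1 : b ^ 2 / 4096 ≤ (7*b/8) ^ 5 * I6 := le_trans hJ6 hjensen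
    have e2 : ((7*b/64) ^ 2 * I6) * b ^ 3 = (8/343) * ((7*b/8) ^ 5 * I6) := by ring
    have e3 : b ^ 3 ≤ b ^ 2 := pow_le_pow_of_le_one hb0.le hb1 (by norm_num)
    have e4 := mul_le_mul_of_nonneg_left e1 (by norm_num : (0:ℝ) ≤ 8/343)
    rw [e2]
    linarith [e3, e4]
  have hfinal : (1:ℝ)/175616 ≤ (7*b/64) ^ 2 * I6 :=
    le_of_mul_le_mul_right hmul hb3
  calc (1:ℝ)/175616 ≤ (7*b/64) ^ 2 * I6 := hfinal
    _ ≤ ∫ x in a..b, f x := hstep1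
    _ ≤ ∫ x in (0:ℝ)..1, f x := hstep2
end

section
/- For the nearly linear growth integrand F(z) = |z| log(1+|z|), the ellipticity ratio satisfies ℛ(z) ≤ C(1 + log(1+|z|)) for all |z| ≥ 1 and ℛ(z) ≥ c·log(1+|z|) for large |z|, for absolute constants 0 < c ≤ C; i.e. the ratio of the eigenvalues of ∂_{zz}F grows logarithmically. -/
open Real

lemma aux16 (t L : ℝ) (ht : 1 ≤ t) (hL : 1/2 ≤ L) :
    0 < (t+2)/(1+t)^2 ∧ (t+2)/(1+t)^2 ≤ L/t + 1/(1+t) ∧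
    (L/t + 1/(1+t)) / ((t+2)/(1+t)^2) ≤ 2*(1+L) ∧
    L ≤ (L/t + 1/(1+t)) / ((t+2)/(1+t)^2) := by
  have ht0 : (0:ℝ) < t := by linarith
  have h1t : (0:ℝ) < 1 + t := by linarith
  have ha0 : 0 < (t+2)/(1+t)^2 := by positivity
  have hb : L/t + 1/(1+t) = (L*(1+t)+t)/(t*(1+t)) := by field_simp
  have hkey : (1/2) * (1+t)^2 ≤ L * (1+t)^2 :=
    mul_le_mul_of_nonneg_right hL (sq_nonneg (1+t))
  have h4 : 4*t ≤ (1+t)^2 := by nlinarith [sq_nonneg (t-1)]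
  have hab : (t+2)/(1+t)^2 ≤ L/t + 1/(1+t) := by
    rw [hb, div_le_div_iff₀ (by positivity) (by positivity)]
    nlinarith [mul_le_mul_of_nonneg_right hkey (le_of_lt h1t),
      mul_le_mul_of_nonneg_right h4 (le_of_lt h1t)]
  refine ⟨ha0, hab, ?_, ?_⟩
  · rw [div_le_iff₀ ha0, hb, ← mul_div_assoc, div_le_div_iff₀ (by positivity) (by positivity)]
    nlinarith [mul_le_mul_of_nonneg_right hkey (le_of_lt h1t), sq_nonneg (1+t),
      mul_nonneg (mul_nonneg (by linarith : (0:ℝ) ≤ L) ht0.le) ht0.le]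
  · rw [le_div_iff₀ ha0, hb, ← mul_div_assoc, div_le_div_iff₀ (by positivity) (by positivity)]
    nlinarith [mul_le_mul_of_nonneg_right hkey (le_of_lt h1t),
      mul_nonneg (by linarith : (0:ℝ) ≤ L) (mul_pos ht0 h1t).le]

/-- For the nearly linear growth integrand `F(z) = |z|log(1+|z|)`, whose Hessian at `z ≠ 0` has
eigenvalues `g''(|z|) = 2/(1+|z|) − |z|/(1+|z|)²` and `g'(|z|)/|z| = log(1+|z|)/|z| + 1/(1+|z|)`,
the ellipticity ratio `ℛ(z)` (larger over smaller eigenvalue) satisfies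
`ℛ(z) ≤ C(1 + log(1+|z|))` for all `|z| ≥ 1` and `ℛ(z) ≥ c·log(1+|z|)` for `|z|` large, for
absolute constants `0 < c ≤ C`: logarithmic growth of the ellipticity ratio. -/
theorem stmt16 (n : ℕ) (hn : 2 ≤ n)
    (lam1 lam2 R : ℝ → ℝ)
    (hlam1 : ∀ t, lam1 t = 2 / (1 + t) - t / (1 + t) ^ 2)
    (hlam2 : ∀ t, lam2 t = Real.log (1 + t) / t + 1 / (1 + t))
    (hR : ∀ z : EuclideanSpace ℝ (Fin n), z ≠ 0 →
      R ‖z‖ = max (lam1 ‖z‖) (lam2 ‖z‖) / min (lam1 ‖z‖) (lam2 ‖z‖)) :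
    ∃ c C : ℝ, 0 < c ∧ c ≤ C ∧
      (∀ z : EuclideanSpace ℝ (Fin n), 1 ≤ ‖z‖ → R ‖z‖ ≤ C * (1 + Real.log (1 + ‖z‖))) ∧
      (∃ T : ℝ, ∀ z : EuclideanSpace ℝ (Fin n), T ≤ ‖z‖ →
        c * Real.log (1 + ‖z‖) ≤ R ‖z‖) := by
  have main : ∀ z : EuclideanSpace ℝ (Fin n), 1 ≤ ‖z‖ →
      R ‖z‖ ≤ 2 * (1 + Real.log (1 + ‖z‖)) ∧ Real.log (1 + ‖z‖) ≤ R ‖z‖ := by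
    intro z hz
    set t := ‖z‖ with htdef
    have hz0 : z ≠ 0 := norm_pos_iff.mp (by rw [← htdef]; linarith)
    have h1t : (0:ℝ) < 1 + t := by linarith
    have hL : 1/2 ≤ Real.log (1 + t) := by
      have h2 : Real.log 2 ≤ Real.log (1 + t) := Real.log_le_log (by norm_num) (by linarith)
      linarith [Real.log_two_gt_d9]
    obtain ⟨ha0, hab, hup, hlo⟩ := aux16 t (Real.log (1 + t)) hz hL
    have he : lam1 t = (t+2)/(1+t)^2 := by
      rw [hlam1]; field_simp; ring
    have hR' : R t = (Real.log (1+t)/t + 1/(1+t)) / ((t+2)/(1+t)^2) := by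
      rw [hR z hz0, he, hlam2, max_eq_right hab, min_eq_left hab]
    rw [hR']
    exact ⟨hup, hlo⟩
  refine ⟨1, 2, one_pos, by norm_num, fun z hz => (main z hz).1, 1, fun z hz => ?_⟩
  simpa using (main z hz).2
end
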